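/- In the controlled discrete route-switching setting, for any fixed threshold s̄ and any policy a, the success probability satisfies P(J_i^a(x) ≤ s̄) ≤ ŵ_i(x, s̄), and the supremum defining ŵ is attained: a policy choosing at state (x, i, accumulated cost c) any action in argmax_{a∈A} Σ_j p_{ij} ŵ_j(F_i(x,a), s̄ − c − K_i(x,a)) achieves P(J_i^a(x) ≤ s̄) = ŵ_i(x, s̄). -/

import Mathlib

open Classical in
/-- Probability that the controlled route-switching process, run under the
feedback policy `pol : (position, mode, accumulated cost) → action`, starting
in mode `i` at node `x` with cost `c` accumulated so far, terminates in `Q`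
within `n` steps with total cumulative cost at most the threshold `s`. -/
noncomputable def reachCtrl {X A : Type*} {M : ℕ} (Q : Set X)
    (F : Fin M → X → A → X) (K : Fin M → X → A → ℝ) (q : Fin M → X → ℝ)
    (p : Fin M → Fin M → ℝ) (pol : X → Fin M → ℝ → A) (s : ℝ) :
    ℕ → Fin M → X → ℝ → ℝ
  | 0, i, x, c => if x ∈ Q ∧ c + q i x ≤ s then 1 else 0
  | n + 1, i, x, c =>
      if x ∈ Q then (if c + q i x ≤ s then 1 else 0)
      else ∑ j, p i j *
        reachCtrl Q F K q p pol s n j (F i x (pol x i c))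
          (c + K i x (pol x i c))

/-- `P(J_i^a(x) ≤ s)`: the probability that the cumulative cost under policy
`pol` does not exceed `s`, as a monotone limit over horizons. -/
noncomputable def polCDF {X A : Type*} {M : ℕ} (Q : Set X)
    (F : Fin M → X → A → X) (K : Fin M → X → A → ℝ) (q : Fin M → X → ℝ)
    (p : Fin M → Fin M → ℝ) (pol : X → Fin M → ℝ → A)
    (i : Fin M) (x : X) (s : ℝ) : ℝ :=
  ⨆ n : ℕ, reachCtrl Q F K q p pol s n i x 0

/-- The threshold-aware value function
`ŵ_i(x,s) = sup over feedback policies of P(J_i^a(x) ≤ s)`. -/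
noncomputable def optCDF {X A : Type*} [Nonempty A] {M : ℕ} (Q : Set X)
    (F : Fin M → X → A → X) (K : Fin M → X → A → ℝ) (q : Fin M → X → ℝ)
    (p : Fin M → Fin M → ℝ) (i : Fin M) (x : X) (s : ℝ) : ℝ :=
  ⨆ pol : X → Fin M → ℝ → A, polCDF Q F K q p pol i x s

/-!
Let `V_n(i, x, s)` be the best probability of stopping in `Q` within `n` steps when the
remaining budget is `s`. Exit costs are nonnegative and every step costs at least `κ > 0`,
so `V_n(·, ·, s)` no longer depends on `n` once `s < n κ`: value iteration stabilizes after
finitely many steps, at a function `W`. Any policy succeeds within `n` steps with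
probability at most `V_n ≤ W`, while a policy that is greedy with respect to `W` realizes
`V_n` exactly on every budget it can reach. Hence `ŵ = W`, and greedy policies attain it.
-/

open Finset

def IsGreedyPolicy {X A : Type*} {M : ℕ} (F : Fin M → X → A → X) (K : Fin M → X → A → ℝ)
    (p : Fin M → Fin M → ℝ) (V : Fin M → X → ℝ → ℝ) (sbar : ℝ) (pol : X → Fin M → ℝ → A) :
    Prop :=
  ∀ x i c a, ∑ j, p i j * V j (F i x a) (sbar - c - K i x a) ≤
    ∑ j, p i j * V j (F i x (pol x i c)) (sbar - c - K i x (pol x i c))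

theorem exists_isGreedyPolicy {X A : Type*} [Fintype A] [Nonempty A] {M : ℕ}
    (F : Fin M → X → A → X) (K : Fin M → X → A → ℝ) (p : Fin M → Fin M → ℝ)
    (V : Fin M → X → ℝ → ℝ) (sbar : ℝ) : ∃ pol, IsGreedyPolicy F K p V sbar pol := by
  choose pol hpol using fun x i c => exists_max_image univ
    (fun a => ∑ j, p i j * V j (F i x a) (sbar - c - K i x a)) univ_nonempty
  exact ⟨pol, fun x i c a => (hpol x i c).2 a (mem_univ a)⟩

noncomputable def horizon (κ s : ℝ) : ℕ := ⌈s / κ⌉₊ + 1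

theorem lt_horizon_mul {κ : ℝ} (hκ : 0 < κ) (s : ℝ) : s < horizon κ s * κ := by
  rw [← div_lt_iff₀ hκ, horizon]
  push_cast
  linarith [Nat.le_ceil (s / κ)]

section ValueIteration

variable {X A : Type*} [Fintype A] [Nonempty A] {M : ℕ} (Q : Set X)
  (F : Fin M → X → A → X) (K : Fin M → X → A → ℝ) (q : Fin M → X → ℝ) (p : Fin M → Fin M → ℝ)

open Classical in
/-- `V_n(i, x, s)`; unlike `reachCtrl`, the last argument is the remaining budget
`s = sbar - c`, not the accumulated cost `c`. -/
noncomputable def reachOpt : ℕ → Fin M → X → ℝ → ℝ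
  | 0, i, x, s => if x ∈ Q ∧ q i x ≤ s then 1 else 0
  | n + 1, i, x, s =>
      if x ∈ Q then (if q i x ≤ s then 1 else 0)
      else univ.sup' univ_nonempty fun a => ∑ j, p i j * reachOpt n j (F i x a) (s - K i x a)

/-- The stabilized value `W`: every horizon `n` with `s < n κ` gives this value
(`reachOpt_eq_reachValue`). -/
noncomputable def reachValue (κ : ℝ) (i : Fin M) (x : X) (s : ℝ) : ℝ :=
  reachOpt Q F K q p (horizon κ s) i x s

variable {Q F K q p}

theorem reachOpt_succ_of_mem {n : ℕ} {i : Fin M} {x : X} {s : ℝ} (hx : x ∈ Q) :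
    reachOpt Q F K q p (n + 1) i x s = if q i x ≤ s then 1 else 0 := by
  simp [reachOpt, hx]

theorem reachOpt_succ_of_notMem {n : ℕ} {i : Fin M} {x : X} {s : ℝ} (hx : x ∉ Q) :
    reachOpt Q F K q p (n + 1) i x s = univ.sup' univ_nonempty
      fun a => ∑ j, p i j * reachOpt Q F K q p n j (F i x a) (s - K i x a) := by
  rw [reachOpt, if_neg hx]

theorem reachOpt_nonneg (hp0 : ∀ i j, 0 ≤ p i j) (n : ℕ) (i : Fin M) (x : X) (s : ℝ) :
    0 ≤ reachOpt Q F K q p n i x s := by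
  induction n generalizing i x s with
  | zero => rw [reachOpt]; positivity
  | succ n ih =>
    by_cases hx : x ∈ Q
    · rw [reachOpt_succ_of_mem hx]; positivity
    · rw [reachOpt_succ_of_notMem hx]
      exact le_sup'_of_le _ (mem_univ (Classical.arbitrary A))
        (sum_nonneg fun j _ => mul_nonneg (hp0 i j) (ih ..))

theorem reachOpt_le_succ (hp0 : ∀ i j, 0 ≤ p i j) (n : ℕ) (i : Fin M) (x : X) (s : ℝ) :
    reachOpt Q F K q p n i x s ≤ reachOpt Q F K q p (n + 1) i x s := by
  induction n generalizing i x s with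
  | zero =>
    by_cases hx : x ∈ Q
    · simp [reachOpt, hx]
    · rw [reachOpt_succ_of_notMem hx, reachOpt, if_neg (fun h => hx h.1)]
      exact le_sup'_of_le _ (mem_univ (Classical.arbitrary A))
        (sum_nonneg fun j _ => mul_nonneg (hp0 i j) (reachOpt_nonneg hp0 ..))
  | succ n ih =>
    by_cases hx : x ∈ Q
    · rw [reachOpt_succ_of_mem hx, reachOpt_succ_of_mem hx]
    · rw [reachOpt_succ_of_notMem hx, reachOpt_succ_of_notMem hx]
      exact sup'_mono_fun fun a _ =>
        sum_le_sum fun j _ => mul_le_mul_of_nonneg_left (ih ..) (hp0 i j)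

theorem reachOpt_mono (hp0 : ∀ i j, 0 ≤ p i j) (i : Fin M) (x : X) (s : ℝ) :
    Monotone fun n => reachOpt Q F K q p n i x s :=
  monotone_nat_of_le_succ fun n => reachOpt_le_succ hp0 n i x s

theorem reachOpt_of_neg (hK : ∀ i x a, 0 ≤ K i x a) (hq : ∀ i, ∀ x ∈ Q, 0 ≤ q i x)
    {s : ℝ} (hs : s < 0) (n : ℕ) (i : Fin M) (x : X) : reachOpt Q F K q p n i x s = 0 := by
  induction n generalizing i x s with
  | zero =>
    rw [reachOpt, if_neg]
    rintro ⟨hx, hqs⟩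
    linarith [hq i x hx]
  | succ n ih =>
    by_cases hx : x ∈ Q
    · rw [reachOpt_succ_of_mem hx, if_neg]
      linarith [hq i x hx]
    · have hzero : ∀ a, ∑ j, p i j * reachOpt Q F K q p n j (F i x a) (s - K i x a) = 0 :=
        fun a => by simp [ih (s := s - K i x a) (by linarith [hK i x a])]
      simp only [reachOpt_succ_of_notMem hx, hzero, sup'_const]

theorem reachOpt_succ_eq_of_lt {κ : ℝ} (hκ : 0 ≤ κ) (hK : ∀ i x a, κ ≤ K i x a)
    (hq : ∀ i, ∀ x ∈ Q, 0 ≤ q i x) {n : ℕ} {s : ℝ} (hs : s < n * κ) (i : Fin M) (x : X) :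
    reachOpt Q F K q p (n + 1) i x s = reachOpt Q F K q p n i x s := by
  induction n generalizing i x s with
  | zero =>
    have hK0 : ∀ i x a, 0 ≤ K i x a := fun i x a => hκ.trans (hK i x a)
    rw [Nat.cast_zero, zero_mul] at hs
    rw [reachOpt_of_neg hK0 hq hs, reachOpt_of_neg hK0 hq hs]
  | succ n ih =>
    by_cases hx : x ∈ Q
    · rw [reachOpt_succ_of_mem hx, reachOpt_succ_of_mem hx]
    · rw [reachOpt_succ_of_notMem hx, reachOpt_succ_of_notMem hx]
      refine sup'_congr _ rfl fun a _ => sum_congr rfl fun j _ => ?_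
      push_cast at hs
      rw [ih (by linarith [hK i x a])]

theorem reachOpt_eq_of_le_of_lt {κ : ℝ} (hκ : 0 ≤ κ) (hK : ∀ i x a, κ ≤ K i x a)
    (hq : ∀ i, ∀ x ∈ Q, 0 ≤ q i x) {n m : ℕ} (hnm : n ≤ m) {s : ℝ} (hs : s < n * κ)
    (i : Fin M) (x : X) : reachOpt Q F K q p m i x s = reachOpt Q F K q p n i x s := by
  induction m, hnm using Nat.le_induction with
  | base => rfl
  | succ m hm ih =>
    have hsm : s < m * κ := hs.trans_le (by gcongr)
    rw [reachOpt_succ_eq_of_lt hκ hK hq hsm, ih]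

theorem reachOpt_eq_reachValue {κ : ℝ} (hκ : 0 < κ) (hK : ∀ i x a, κ ≤ K i x a)
    (hq : ∀ i, ∀ x ∈ Q, 0 ≤ q i x) {n : ℕ} {s : ℝ} (hs : s < n * κ) (i : Fin M) (x : X) :
    reachOpt Q F K q p n i x s = reachValue Q F K q p κ i x s := by
  rcases le_total n (horizon κ s) with h | h
  · exact (reachOpt_eq_of_le_of_lt hκ.le hK hq h hs i x).symm
  · exact reachOpt_eq_of_le_of_lt hκ.le hK hq h (lt_horizon_mul hκ s) i x

theorem reachOpt_le_reachValue (hp0 : ∀ i j, 0 ≤ p i j) {κ : ℝ} (hκ : 0 < κ)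
    (hK : ∀ i x a, κ ≤ K i x a) (hq : ∀ i, ∀ x ∈ Q, 0 ≤ q i x) (n : ℕ) (i : Fin M) (x : X)
    (s : ℝ) : reachOpt Q F K q p n i x s ≤ reachValue Q F K q p κ i x s := by
  rcases le_total n (horizon κ s) with h | h
  · exact reachOpt_mono hp0 i x s h
  · have hs : s < n * κ := (lt_horizon_mul hκ s).trans_le (by gcongr)
    exact (reachOpt_eq_reachValue hκ hK hq hs i x).le

theorem reachCtrl_zero_eq_reachOpt (pol : X → Fin M → ℝ → A) (s : ℝ) (i : Fin M) (x : X)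
    (c : ℝ) : reachCtrl Q F K q p pol s 0 i x c = reachOpt Q F K q p 0 i x (s - c) := by
  rw [reachCtrl, reachOpt]
  classical
  exact if_congr (and_congr_right' le_sub_iff_add_le'.symm) rfl rfl

theorem reachCtrl_succ_eq_reachOpt_of_mem (pol : X → Fin M → ℝ → A) (s : ℝ) {n : ℕ}
    (i : Fin M) {x : X} (hx : x ∈ Q) (c : ℝ) :
    reachCtrl Q F K q p pol s (n + 1) i x c = reachOpt Q F K q p (n + 1) i x (s - c) := by
  rw [reachCtrl, if_pos hx, reachOpt_succ_of_mem hx]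
  exact if_congr le_sub_iff_add_le'.symm rfl rfl

theorem reachCtrl_le_reachOpt (hp0 : ∀ i j, 0 ≤ p i j) (pol : X → Fin M → ℝ → A) (s : ℝ)
    (n : ℕ) (i : Fin M) (x : X) (c : ℝ) :
    reachCtrl Q F K q p pol s n i x c ≤ reachOpt Q F K q p n i x (s - c) := by
  induction n generalizing i x c with
  | zero => exact (reachCtrl_zero_eq_reachOpt pol s i x c).le
  | succ n ih =>
    by_cases hx : x ∈ Q
    · exact (reachCtrl_succ_eq_reachOpt_of_mem pol s i hx c).le
    · rw [reachCtrl, if_neg hx, reachOpt_succ_of_notMem hx]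
      refine le_sup'_of_le _ (mem_univ (pol x i c))
        (sum_le_sum fun j _ => mul_le_mul_of_nonneg_left ?_ (hp0 i j))
      rw [sub_sub]
      exact ih ..

theorem reachCtrl_le_reachValue (hp0 : ∀ i j, 0 ≤ p i j) {κ : ℝ} (hκ : 0 < κ)
    (hK : ∀ i x a, κ ≤ K i x a) (hq : ∀ i, ∀ x ∈ Q, 0 ≤ q i x) (pol : X → Fin M → ℝ → A)
    (s : ℝ) (n : ℕ) (i : Fin M) (x : X) :
    reachCtrl Q F K q p pol s n i x 0 ≤ reachValue Q F K q p κ i x s := by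
  calc reachCtrl Q F K q p pol s n i x 0 ≤ reachOpt Q F K q p n i x (s - 0) :=
        reachCtrl_le_reachOpt hp0 pol s n i x 0
    _ ≤ reachValue Q F K q p κ i x s := by
        rw [sub_zero]
        exact reachOpt_le_reachValue hp0 hκ hK hq n i x s

theorem reachCtrl_eq_reachOpt_of_isGreedyPolicy {κ : ℝ} (hκ : 0 < κ)
    (hK : ∀ i x a, κ ≤ K i x a) (hq : ∀ i, ∀ x ∈ Q, 0 ≤ q i x) {sbar : ℝ}
    {pol : X → Fin M → ℝ → A} (hpol : IsGreedyPolicy F K p (reachValue Q F K q p κ) sbar pol)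
    (n : ℕ) (i : Fin M) (x : X) (c : ℝ) (hc : sbar - c < n * κ) :
    reachCtrl Q F K q p pol sbar n i x c = reachOpt Q F K q p n i x (sbar - c) := by
  induction n generalizing i x c with
  | zero => exact reachCtrl_zero_eq_reachOpt pol sbar i x c
  | succ n ih =>
    by_cases hx : x ∈ Q
    · exact reachCtrl_succ_eq_reachOpt_of_mem pol sbar i hx c
    · have hlt : ∀ a, sbar - c - K i x a < n * κ := fun a => by
        push_cast at hc
        linarith [hK i x a]
      have hnext : ∀ a, ∑ j, p i j * reachOpt Q F K q p n j (F i x a) (sbar - c - K i x a) =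
          ∑ j, p i j * reachValue Q F K q p κ j (F i x a) (sbar - c - K i x a) := fun a =>
        sum_congr rfl fun j _ => by rw [reachOpt_eq_reachValue hκ hK hq (hlt a)]
      have hctrl : reachCtrl Q F K q p pol sbar (n + 1) i x c =
          ∑ j, p i j * reachOpt Q F K q p n j (F i x (pol x i c)) (sbar - c - K i x (pol x i c)) := by
        rw [reachCtrl, if_neg hx]
        refine sum_congr rfl fun j _ => ?_
        rw [ih _ _ _ (by rw [← sub_sub]; exact hlt _), sub_sub]
      rw [hctrl, reachOpt_succ_of_notMem hx]
      simp only [hnext]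
      exact le_antisymm (le_sup'_of_le _ (mem_univ (pol x i c)) le_rfl) (sup'_le _ _ fun a _ => hpol x i c a)

theorem polCDF_le_reachValue (hp0 : ∀ i j, 0 ≤ p i j) {κ : ℝ} (hκ : 0 < κ)
    (hK : ∀ i x a, κ ≤ K i x a) (hq : ∀ i, ∀ x ∈ Q, 0 ≤ q i x) (pol : X → Fin M → ℝ → A)
    (i : Fin M) (x : X) (s : ℝ) : polCDF Q F K q p pol i x s ≤ reachValue Q F K q p κ i x s :=
  ciSup_le fun n => reachCtrl_le_reachValue hp0 hκ hK hq pol s n i x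

theorem polCDF_eq_reachValue_of_isGreedyPolicy (hp0 : ∀ i j, 0 ≤ p i j) {κ : ℝ} (hκ : 0 < κ)
    (hK : ∀ i x a, κ ≤ K i x a) (hq : ∀ i, ∀ x ∈ Q, 0 ≤ q i x) {sbar : ℝ}
    {pol : X → Fin M → ℝ → A} (hpol : IsGreedyPolicy F K p (reachValue Q F K q p κ) sbar pol)
    (i : Fin M) (x : X) : polCDF Q F K q p pol i x sbar = reachValue Q F K q p κ i x sbar := by
  refine le_antisymm (polCDF_le_reachValue hp0 hκ hK hq pol i x sbar) ?_
  have hbdd : BddAbove (Set.range fun n => reachCtrl Q F K q p pol sbar n i x 0) :=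
    ⟨_, Set.forall_mem_range.2 fun n => reachCtrl_le_reachValue hp0 hκ hK hq pol sbar n i x⟩
  calc reachValue Q F K q p κ i x sbar
      = reachCtrl Q F K q p pol sbar (horizon κ sbar) i x 0 := by
        rw [reachCtrl_eq_reachOpt_of_isGreedyPolicy hκ hK hq hpol _ i x 0
          (by simpa using lt_horizon_mul hκ sbar), sub_zero, reachValue]
    _ ≤ polCDF Q F K q p pol i x sbar := le_ciSup hbdd _

theorem optCDF_eq_reachValue (hp0 : ∀ i j, 0 ≤ p i j) {κ : ℝ} (hκ : 0 < κ)
    (hK : ∀ i x a, κ ≤ K i x a) (hq : ∀ i, ∀ x ∈ Q, 0 ≤ q i x) (i : Fin M) (x : X) (s : ℝ) :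
    optCDF Q F K q p i x s = reachValue Q F K q p κ i x s := by
  obtain ⟨pol, hpol⟩ := exists_isGreedyPolicy F K p (reachValue Q F K q p κ) s
  have hbdd : BddAbove (Set.range fun pol => polCDF Q F K q p pol i x s) :=
    ⟨_, Set.forall_mem_range.2 fun pol => polCDF_le_reachValue hp0 hκ hK hq pol i x s⟩
  refine le_antisymm (ciSup_le fun pol => polCDF_le_reachValue hp0 hκ hK hq pol i x s) ?_
  rw [← polCDF_eq_reachValue_of_isGreedyPolicy hp0 hκ hK hq hpol i x]
  exact le_ciSup hbdd pol

end ValueIteration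

theorem optCDF_attained_general {X A : Type*} [Fintype A]
    [Nonempty A] {M : ℕ} (Q : Set X)
    (F : Fin M → X → A → X) (K : Fin M → X → A → ℝ) (q : Fin M → X → ℝ)
    (p : Fin M → Fin M → ℝ) (κ : ℝ) (hκ : 0 < κ)
    (hK : ∀ i x a, κ ≤ K i x a) (hq : ∀ i, ∀ x ∈ Q, 0 ≤ q i x)
    (hp0 : ∀ i j, 0 ≤ p i j)
    (sbar : ℝ) :
    (∀ (pol : X → Fin M → ℝ → A) (i : Fin M) (x : X),
        polCDF Q F K q p pol i x sbar ≤ optCDF Q F K q p i x sbar) ∧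
    (∀ pol : X → Fin M → ℝ → A,
      (∀ (x : X) (i : Fin M) (c : ℝ) (a : A),
        (∑ j, p i j * optCDF Q F K q p j (F i x a) (sbar - c - K i x a))
          ≤ ∑ j, p i j * optCDF Q F K q p j (F i x (pol x i c))
              (sbar - c - K i x (pol x i c))) →
      ∀ (i : Fin M) (x : X),
        polCDF Q F K q p pol i x sbar = optCDF Q F K q p i x sbar) := by
  have hopt : optCDF Q F K q p = reachValue Q F K q p κ := by
    ext i x s
    exact optCDF_eq_reachValue hp0 hκ hK hq i x s
  refine ⟨fun pol i x => hopt ▸ polCDF_le_reachValue hp0 hκ hK hq pol i x sbar,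
    fun pol hpol i x => ?_⟩
  rw [hopt] at hpol ⊢
  exact polCDF_eq_reachValue_of_isGreedyPolicy hp0 hκ hK hq hpol i x

/-- **Optimality and attainment for the threshold-aware value function:**
for any fixed threshold `s̄`, every policy's success probability is at most
`ŵ_i(x, s̄)`, and any policy that at each state `(x, i, accumulated cost c)`
chooses an action maximizing
`a ↦ Σ_j p_{ij} ŵ_j(F_i(x,a), s̄ − c − K_i(x,a))` achieves
`P(J_i^a(x) ≤ s̄) = ŵ_i(x, s̄)`. -/
theorem optCDF_attained {X A : Type*} [Fintype X] [Fintype A]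
    [Nonempty A] {M : ℕ} (Q : Set X)
    (F : Fin M → X → A → X) (K : Fin M → X → A → ℝ) (q : Fin M → X → ℝ)
    (p : Fin M → Fin M → ℝ) (κ : ℝ) (hκ : 0 < κ)
    (hK : ∀ i x a, κ ≤ K i x a) (hq : ∀ i, ∀ x ∈ Q, 0 ≤ q i x)
    (hp0 : ∀ i j, 0 ≤ p i j) (hp1 : ∀ i, ∑ j, p i j = 1)
    (sbar : ℝ) :
    (∀ (pol : X → Fin M → ℝ → A) (i : Fin M) (x : X),
        polCDF Q F K q p pol i x sbar ≤ optCDF Q F K q p i x sbar) ∧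
    (∀ pol : X → Fin M → ℝ → A,
      (∀ (x : X) (i : Fin M) (c : ℝ) (a : A),
        (∑ j, p i j * optCDF Q F K q p j (F i x a) (sbar - c - K i x a))
          ≤ ∑ j, p i j * optCDF Q F K q p j (F i x (pol x i c))
              (sbar - c - K i x (pol x i c))) →
      ∀ (i : Fin M) (x : X),
        polCDF Q F K q p pol i x sbar = optCDF Q F K q p i x sbar) :=
  optCDF_attained_general Q F K q p κ hκ hK hq hp0 sbar
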